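/- arXiv:2004.10441 — 2 statements merged into one kernel-verified Lean document; each statement's English description precedes it below -/
import Mathlib

section
/- Let f : ℝ → ℝ be C^n on [a',b] with a', b integers, a' < b, n ≥ 2, and let p ≥ 0 be an integer. Define R_{np} = (-1)^n ∫_{a'}^b ∑_{|k|>p} e^{2πikx}/(2πik)^n f^{(n)}(x) dx and T_{n,p} = (2/(2π)^n)(ζ(n) - ∑_{k=1}^p k^{-n}). Then |R_{np}| ≤ T_{n,p} ∫_{a'}^b |f^{(n)}(x)| dx. -/
open Real intervalIntegral

/-- `∑_{|k|>p} e^{2πikx}/(2πik)^n`. -/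
noncomputable def cTail (n p : ℕ) (x : ℝ) : ℂ :=
  ∑' k : {k : ℤ // p < k.natAbs},
    Complex.exp (2 * Real.pi * Complex.I * ((k : ℤ) : ℂ) * x) /
      (2 * Real.pi * Complex.I * ((k : ℤ) : ℂ)) ^ n

/-- `T_{n,p} = (2/(2π)^n) (ζ(n) - ∑_{k=1}^p k^{-n})` with `ζ(n) = ∑_{k≥1} k^{-n}`. -/
noncomputable def Tnp (n p : ℕ) : ℝ :=
  2 / (2 * Real.pi) ^ n *
    ((∑' k : ℕ, 1 / ((k : ℝ) + 1) ^ n) - ∑ k ∈ Finset.Icc 1 p, 1 / (k : ℝ) ^ n)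

/-! Every term of the tail series has modulus `1 / (2π|k|)^n`, and these moduli sum over
`|k| > p` to exactly `T_{n,p}` (twice the tail of `ζ(n)`, scaled by `(2π)^{-n}`). Hence the tail
is bounded by `T_{n,p}` uniformly in `x`, and the estimate follows by integrating against
`|f^{(n)}|`, which is continuous on `[a', b]`. -/

theorem norm_cexp_two_pi_I_mul_div_pow (n : ℕ) (k : ℤ) (x : ℝ) :
    ‖Complex.exp (2 * π * Complex.I * (k : ℂ) * x) / (2 * π * Complex.I * (k : ℂ)) ^ n‖ =
      1 / (2 * π * |(k : ℝ)|) ^ n := by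
  have hexp : 2 * π * Complex.I * (k : ℂ) * x = ((2 * π * k * x : ℝ) : ℂ) * Complex.I := by
    push_cast; ring
  rw [norm_div, norm_pow, hexp, Complex.norm_exp_ofReal_mul_I, norm_mul, norm_mul, norm_mul,
    Complex.norm_I, Complex.norm_two, Complex.norm_real, Complex.norm_intCast,
    Real.norm_of_nonneg pi_pos.le, mul_one]

theorem sum_range_one_div_succ_pow (n p : ℕ) :
    ∑ j ∈ Finset.range p, 1 / ((j : ℝ) + 1) ^ n = ∑ k ∈ Finset.Icc 1 p, 1 / (k : ℝ) ^ n := by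
  rw [← Finset.Ico_add_one_right_eq_Icc, Finset.sum_Ico_eq_sum_range, Nat.add_sub_cancel]
  simp only [Nat.cast_add, Nat.cast_one, add_comm]

theorem hasSum_one_div_succ_pow_tail {n : ℕ} (hn : 2 ≤ n) (p : ℕ) :
    HasSum (fun j : ℕ => if p ≤ j then 1 / ((j : ℝ) + 1) ^ n else 0)
      ((∑' k : ℕ, 1 / ((k : ℝ) + 1) ^ n) - ∑ k ∈ Finset.Icc 1 p, 1 / (k : ℝ) ^ n) := by
  have hzeta : Summable fun k : ℕ => 1 / ((k : ℝ) + 1) ^ n := by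
    exact_mod_cast (summable_nat_add_iff 1).mpr (summable_one_div_nat_pow.mpr (by omega))
  have hshift := (hasSum_nat_add_iff' p).mpr hzeta.hasSum
  rw [sum_range_one_div_succ_pow] at hshift
  rw [← hasSum_nat_add_iff' p, Finset.sum_eq_zero fun j hj => if_neg (by simpa using hj),
    sub_zero]
  simpa using hshift

theorem hasSum_one_div_two_pi_abs_pow_tail {n : ℕ} (hn : 2 ≤ n) (p : ℕ) :
    HasSum (fun k : {k : ℤ // p < k.natAbs} => 1 / (2 * π * |((k : ℤ) : ℝ)|) ^ n) (Tnp n p) := by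
  set g := Set.indicator {k : ℤ | p < k.natAbs} fun k => 1 / (2 * π * |(k : ℝ)|) ^ n
  have hg_succ (j : ℕ) :
      g (j + 1) = 1 / (2 * π) ^ n * if p ≤ j then 1 / ((j : ℝ) + 1) ^ n else 0 := by
    simp only [g]
    by_cases hj : p ≤ j
    · rw [Set.indicator_of_mem (by simp only [Set.mem_ofPred_eq]; omega), if_pos hj, mul_pow,
        one_div_mul_one_div]
      norm_cast
    · rw [Set.indicator_of_notMem (by simp only [Set.mem_ofPred_eq]; omega), if_neg hj, mul_zero]
  have hhalf : HasSum (fun j : ℕ => g (j + 1)) (Tnp n p / 2) := by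
    have hTnp : Tnp n p / 2 = 1 / (2 * π) ^ n *
        ((∑' k : ℕ, 1 / ((k : ℝ) + 1) ^ n) - ∑ k ∈ Finset.Icc 1 p, 1 / (k : ℝ) ^ n) := by
      unfold Tnp
      ring
    simp_rw [hg_succ, hTnp]
    exact (hasSum_one_div_succ_pow_tail hn p).mul_left _
  have hg_neg : HasSum (fun j : ℕ => g (-(j + 1))) (Tnp n p / 2) := by
    refine hhalf.congr_fun fun j => ?_
    simp only [g, Set.indicator_apply, Set.mem_ofPred_eq, Int.natAbs_neg, Int.cast_neg, abs_neg]
  have hzero : g 0 = 0 := Set.indicator_of_notMem (by simp) _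
  have hsum := hhalf.of_add_one_of_neg_add_one hg_neg
  rw [hzero, add_zero, add_halves] at hsum
  exact hasSum_subtype_iff_indicator.mpr hsum

theorem norm_cTail_le {n : ℕ} (hn : 2 ≤ n) (p : ℕ) (x : ℝ) : ‖cTail n p x‖ ≤ Tnp n p :=
  tsum_of_norm_bounded (hasSum_one_div_two_pi_abs_pow_tail hn p) fun k =>
    (norm_cexp_two_pi_I_mul_div_pow n k x).le

/-- `|R_{np}| ≤ T_{n,p} ∫_{a'}^b |f^{(n)}|`. -/
theorem memf_remainder_estimate_A (f : ℝ → ℝ) (a' b : ℤ) (hab : a' < b)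
    (n : ℕ) (hn : 2 ≤ n) (p : ℕ)
    (hf : ContDiffOn ℝ n f (Set.Icc (a' : ℝ) (b : ℝ))) :
    ‖(-1 : ℂ) ^ n * ∫ x in (a' : ℝ)..(b : ℝ),
        cTail n p x * Complex.ofReal (iteratedDerivWithin n f (Set.Icc (a' : ℝ) (b : ℝ)) x)‖ ≤
      Tnp n p * ∫ x in (a' : ℝ)..(b : ℝ),
        |iteratedDerivWithin n f (Set.Icc (a' : ℝ) (b : ℝ)) x| := by
  have hab' : (a' : ℝ) < b := by exact_mod_cast hab
  set φ := iteratedDerivWithin n f (Set.Icc (a' : ℝ) (b : ℝ))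
  have hφ : ContinuousOn φ (Set.uIcc (a' : ℝ) b) := by
    rw [Set.uIcc_of_le hab'.le]
    exact hf.continuousOn_iteratedDerivWithin le_rfl (uniqueDiffOn_Icc hab')
  rw [norm_mul, norm_pow, norm_neg, norm_one, one_pow, one_mul, ← integral_const_mul]
  refine norm_integral_le_of_norm_le hab'.le (.of_forall fun x _ => ?_)
    (continuousOn_const.mul hφ.abs).intervalIntegrable
  rw [norm_mul, Complex.norm_real, Real.norm_eq_abs]
  gcongr
  exact norm_cTail_le hn p x
end

section
/- For every nonnegative integer n and every real x, |H_n(x) e^{-x²}| ≤ 2^n Γ((n+1)/2)/√π, where H_n is the n-th (physicists') Hermite polynomial. -/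
set_option maxHeartbeats 1000000

open Real

/-- The `n`-th physicists' Hermite polynomial,
`H_n(x) = (-1)^n e^{x²} dⁿ/dxⁿ e^{-x²}`. -/
noncomputable def hermiteP (n : ℕ) (x : ℝ) : ℝ :=
  (-1) ^ n * Real.exp (x ^ 2) * iteratedDeriv n (fun t => Real.exp (-t ^ 2)) x

open MeasureTheory Complex FourierTransform in
lemma aux_iteratedDeriv_ofReal {f : ℝ → ℝ} (hf : ContDiff ℝ (⊤ : ℕ∞) f) (n : ℕ) (x : ℝ) :
    iteratedDeriv n (fun t => (f t : ℂ)) x = ((iteratedDeriv n f x : ℝ) : ℂ) := by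
  have h := Complex.ofRealCLM.iteratedFDeriv_comp_left (hf.contDiffAt (x := x)) (i := n) (mod_cast le_top)
  rw [iteratedDeriv, iteratedDeriv]
  have he : (fun t => (f t : ℂ)) = (Complex.ofRealCLM ∘ f) := rfl
  rw [he, h]
  rfl

open MeasureTheory Complex FourierTransform in
lemma gauss_deriv_bound (n : ℕ) (x : ℝ) :
    ‖iteratedDeriv n (fun t : ℝ => Complex.exp (-(t : ℂ) ^ 2)) x‖ ≤
      2 ^ n * Real.Gamma (((n : ℝ) + 1) / 2) / Real.sqrt Real.pi := by
  have hπ : (0 : ℝ) < π := Real.pi_pos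
  set f₀ : ℝ → ℂ := fun t => Complex.exp (-(π : ℂ) * π * (t : ℂ) ^ 2) with hf₀
  have hFT : 𝓕 f₀ = fun t : ℝ =>
      1 / (π : ℂ) ^ (1 / 2 : ℂ) * Complex.exp (-(π : ℂ) / π * (t : ℂ) ^ 2) :=
    fourier_gaussian_pi (by simpa using hπ)
  have h12 : ((π : ℂ) ^ (1 / 2 : ℂ)) = ((Real.sqrt π : ℝ) : ℂ) := by
    rw [Real.sqrt_eq_rpow, Complex.ofReal_cpow hπ.le]
    norm_num
  have hπc : ((π : ℝ) : ℂ) ≠ 0 := Complex.ofReal_ne_zero.mpr hπ.ne'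
  have hsπ : (0:ℝ) < Real.sqrt π := Real.sqrt_pos.mpr hπ
  have hg : (fun t : ℝ => Complex.exp (-(t : ℂ) ^ 2)) = ((Real.sqrt π : ℝ) : ℂ) • 𝓕 f₀ := by
    funext t
    rw [Pi.smul_apply, hFT]
    simp only [smul_eq_mul]
    rw [h12, neg_div, div_self hπc, ← mul_assoc,
      mul_one_div, div_self (Complex.ofReal_ne_zero.mpr hsπ.ne'), one_mul, neg_one_mul]
  -- norm of f₀
  have hnorm : ∀ t : ℝ, ‖f₀ t‖ = Real.exp (-(π * π) * t ^ 2) := by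
    intro t
    simp only [hf₀]
    rw [show (-(π:ℂ) * π * (t:ℂ) ^ 2) = ((-(π * π) * t ^ 2 : ℝ) : ℂ) by push_cast; ring]
    rw [← Complex.ofReal_exp, Complex.norm_real, Real.norm_eq_abs, abs_of_pos (Real.exp_pos _)]
  -- integrability
  have hint : ∀ k : ℕ, (k : ℕ∞) ≤ (n : ℕ∞) → Integrable (fun t : ℝ => t ^ k • f₀ t) := by
    intro k _
    have h1 : Integrable (fun t : ℝ => t ^ k * Real.exp (-(π * π) * t ^ 2)) := by
      have := integrable_rpow_mul_exp_neg_mul_sq (mul_pos hπ hπ) (s := (k : ℝ))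
        (by exact_mod_cast neg_one_lt_zero.trans_le (Nat.cast_nonneg k))
      simpa [Real.rpow_natCast] using this
    refine h1.abs.mono' ?_ ?_
    · apply Continuous.aestronglyMeasurable
      fun_prop
    · filter_upwards with t
      rw [norm_smul, hnorm, abs_mul, abs_of_pos (Real.exp_pos _)]
      simp
  have hD := Real.iteratedDeriv_fourier (f := f₀) (N := n) hint le_rfl
  have hsmooth : ContDiff ℝ n (𝓕 f₀) := by
    rw [hFT]
    apply ContDiff.mul contDiff_const
    apply Complex.contDiff_exp.comp
    exact contDiff_const.mul ((Complex.ofRealCLM.contDiff).pow 2)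
  have hder : iteratedDeriv n (fun t : ℝ => Complex.exp (-(t : ℂ) ^ 2)) x
      = ((Real.sqrt π : ℝ) : ℂ) • iteratedDeriv n (𝓕 f₀) x := by
    rw [hg, ← iteratedDerivWithin_univ, ← iteratedDerivWithin_univ]
    exact iteratedDerivWithin_const_smul (Set.mem_univ x) uniqueDiffOn_univ _ hsmooth.contDiffWithinAt
  rw [hder, hD, norm_smul, Complex.norm_real, Real.norm_eq_abs, abs_of_pos hsπ]
  -- norm bound of Fourier integral
  have hbound : ‖𝓕 (fun t : ℝ => (-2 * (π:ℂ) * I * (t:ℂ)) ^ n • f₀ t) x‖ ≤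
      ∫ t : ℝ, ‖(-2 * (π:ℂ) * I * (t:ℂ)) ^ n • f₀ t‖ :=
    VectorFourier.norm_fourierIntegral_le_integral_norm _ _ _ _ _
  have hnorm2 : ∀ t : ℝ, ‖(-2 * (π:ℂ) * I * (t:ℂ)) ^ n • f₀ t‖
      = (2 * π) ^ n * (|t| ^ n * Real.exp (-(π * π) * |t| ^ 2)) := by
    intro t
    rw [norm_smul, norm_pow, hnorm]
    have h5 : ‖-2 * (π:ℂ) * I * (t:ℂ)‖ = 2 * π * |t| := by
      simp [map_mul, Complex.norm_real, Complex.norm_I,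
        abs_of_pos hπ]
    rw [h5, mul_pow, mul_pow, _root_.sq_abs t]
    ring
  -- value of the integral
  have hIoi : ∫ t in Set.Ioi (0:ℝ), t ^ n * Real.exp (-(π * π) * t ^ 2)
      = (π * π) ^ (-((n:ℝ) + 1) / 2) * (1 / 2) * Real.Gamma (((n:ℝ) + 1) / 2) := by
    have := integral_rpow_mul_exp_neg_mul_rpow (p := 2) (q := (n : ℝ)) (b := π * π)
      zero_lt_two (by exact_mod_cast neg_one_lt_zero.trans_le (Nat.cast_nonneg n)) (mul_pos hπ hπ)
    simpa [Real.rpow_natCast, Real.rpow_two] using this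
  have hintval : ∫ t : ℝ, ‖(-2 * (π:ℂ) * I * (t:ℂ)) ^ n • f₀ t‖
      = (2 * π) ^ n * (2 * ((π * π) ^ (-((n:ℝ) + 1) / 2) * (1 / 2) * Real.Gamma (((n:ℝ) + 1) / 2))) := by
    simp_rw [hnorm2]
    rw [integral_const_mul, _root_.integral_comp_abs
      (f := fun u : ℝ => u ^ n * Real.exp (-(π * π) * u ^ 2)), hIoi]
  have hpow : (π * π : ℝ) ^ (-((n:ℝ) + 1) / 2) = (π ^ (n + 1) : ℝ)⁻¹ := by
    rw [show (π * π : ℝ) = π ^ (2:ℝ) by rw [Real.rpow_two]; ring,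
      ← Real.rpow_natCast π (n + 1), ← Real.rpow_neg hπ.le,
      ← Real.rpow_mul hπ.le]
    push_cast
    ring_nf
  calc Real.sqrt π * ‖𝓕 (fun t : ℝ => (-2 * (π:ℂ) * I * (t:ℂ)) ^ n • f₀ t) x‖
      ≤ Real.sqrt π * ∫ t : ℝ, ‖(-2 * (π:ℂ) * I * (t:ℂ)) ^ n • f₀ t‖ := by
        exact mul_le_mul_of_nonneg_left hbound hsπ.le
    _ = 2 ^ n * Real.Gamma (((n:ℝ) + 1) / 2) / Real.sqrt Real.pi := by
        rw [hintval, hpow]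
        have h2 : Real.sqrt π * Real.sqrt π = π := Real.mul_self_sqrt hπ.le
        have h3 : (π:ℝ) ^ (n+1) ≠ 0 := by positivity
        field_simp
        rw [mul_pow, pow_succ]
        ring_nf
        rw [Real.sq_sqrt hπ.le]

/-- `|H_n(x) e^{-x²}| ≤ 2^n Γ((n+1)/2)/√π` for all `n` and real `x`. -/
theorem hermite_gauss_bound (n : ℕ) (x : ℝ) :
    |hermiteP n x * Real.exp (-x ^ 2)| ≤
      2 ^ n * Real.Gamma (((n : ℝ) + 1) / 2) / Real.sqrt Real.pi := by
  have hsm : ContDiff ℝ (⊤ : ℕ∞) (fun t : ℝ => Real.exp (-t ^ 2)) := by fun_prop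
  have h0 : hermiteP n x * Real.exp (-x ^ 2)
      = (-1) ^ n * iteratedDeriv n (fun t => Real.exp (-t ^ 2)) x := by
    unfold hermiteP
    have he : Real.exp (x ^ 2) * Real.exp (-x ^ 2) = 1 := by
      rw [← Real.exp_add, add_neg_cancel, Real.exp_zero]
    calc (-1) ^ n * Real.exp (x ^ 2) * iteratedDeriv n (fun t => Real.exp (-t ^ 2)) x
        * Real.exp (-x ^ 2)
        = (-1) ^ n * iteratedDeriv n (fun t => Real.exp (-t ^ 2)) x
          * (Real.exp (x ^ 2) * Real.exp (-x ^ 2)) := by ring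
      _ = (-1) ^ n * iteratedDeriv n (fun t => Real.exp (-t ^ 2)) x := by rw [he, mul_one]
  rw [h0, abs_mul, abs_pow, abs_neg, abs_one, one_pow, one_mul]
  have h2 : |iteratedDeriv n (fun t => Real.exp (-t ^ 2)) x|
      = ‖iteratedDeriv n (fun t : ℝ => Complex.exp (-(t : ℂ) ^ 2)) x‖ := by
    have hfun : (fun t : ℝ => Complex.exp (-(t : ℂ) ^ 2))
        = (fun t : ℝ => ((Real.exp (-t ^ 2) : ℝ) : ℂ)) := by
      funext t
      rw [Complex.ofReal_exp]
      push_cast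
      ring_nf
    rw [hfun, aux_iteratedDeriv_ofReal hsm, Complex.norm_real, Real.norm_eq_abs]
  rw [h2]
  exact gauss_deriv_bound n x
end
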